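/- arXiv:2109.13415 — 2 statements merged into one kernel-verified Lean document; each statement's English description precedes it below -/
import Mathlib

section
/- Comparison-lemma safety (forward invariance via ZCBF): let h : ℝⁿ → ℝ be continuously differentiable and x : [0,∞) → ℝⁿ a continuously differentiable trajectory. Suppose there is a locally Lipschitz extended class-K function α (strictly increasing, α(0)=0) such that d/dt h(x_t) ≥ −α(h(x_t)) for all t ≥ 0, and h(x_0) ≥ 0. Then h(x_t) ≥ 0 for all t ≥ 0. -/
theorem zcbf_forward_invariance {n : ℕ}
    (h : EuclideanSpace ℝ (Fin n) → ℝ) (x : ℝ → EuclideanSpace ℝ (Fin n))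
    (α : ℝ → ℝ) (d : ℝ → ℝ)
    (hh : ContDiff ℝ 1 h) (hx : ContDiff ℝ 1 x)
    (hα : LocallyLipschitz α) (hαmono : StrictMono α) (hα0 : α 0 = 0)
    (hderiv : ∀ t, 0 ≤ t → HasDerivAt (fun s => h (x s)) (d t) t)
    (hineq : ∀ t, 0 ≤ t → d t ≥ -α (h (x t)))
    (h0 : h (x 0) ≥ 0) :
    ∀ t, 0 ≤ t → h (x t) ≥ 0 := by
  set y : ℝ → ℝ := fun s => h (x s) with hy
  have hycont : Continuous y := hh.continuous.comp hx.continuous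
  intro t₁ ht₁
  by_contra hneg
  push_neg at hneg
  -- let s be the last time in [0, t₁] with y ≥ 0
  set S : Set ℝ := {t | t ∈ Set.Icc 0 t₁ ∧ 0 ≤ y t} with hS
  have hSne : S.Nonempty := ⟨0, ⟨le_refl 0, ht₁⟩, h0⟩
  have hSbdd : BddAbove S := ⟨t₁, fun t ht => ht.1.2⟩
  have hSclosed : IsClosed S := by
    have : S = Set.Icc 0 t₁ ∩ y ⁻¹' Set.Ici 0 := by
      ext t; simp [hS, Set.mem_Icc, and_comm]
    rw [this]
    exact isClosed_Icc.inter (isClosed_Ici.preimage hycont)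
  set s := sSup S with hs
  have hsS : s ∈ S := hSclosed.csSup_mem hSne hSbdd
  have hs0 : 0 ≤ s := hsS.1.1
  have hst₁ : s ≤ t₁ := hsS.1.2
  have hys : 0 ≤ y s := hsS.2
  have hslt : s < t₁ := hst₁.lt_of_ne fun he => absurd (he ▸ hys) (not_le.mpr hneg)
  -- on (s, t₁], y < 0
  have hyneg : ∀ t, s < t → t ≤ t₁ → y t < 0 := by
    intro t hst htt₁
    by_contra hc
    push_neg at hc
    have : t ∈ S := ⟨⟨hs0.trans hst.le, htt₁⟩, hc⟩
    exact absurd (le_csSup hSbdd this) (not_le.mpr hst)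
  -- y is monotone on [s, t₁] since its derivative is nonneg on the interior
  have hmono : MonotoneOn y (Set.Icc s t₁) := by
    apply monotoneOn_of_deriv_nonneg (convex_Icc s t₁) hycont.continuousOn
    · intro t ht
      rw [interior_Icc] at ht
      exact (hderiv t (hs0.trans ht.1.le)).differentiableAt.differentiableWithinAt
    · intro t ht
      rw [interior_Icc] at ht
      have h1 : 0 ≤ t := hs0.trans ht.1.le
      rw [(hderiv t h1).deriv]
      have hyt : y t < 0 := hyneg t ht.1 ht.2.le
      have : α (y t) < α 0 := hαmono hyt
      rw [hα0] at this
      linarith [hineq t h1]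
  have := hmono ⟨le_refl s, hst₁⟩ ⟨hst₁, le_refl t₁⟩ hst₁
  linarith
end

section
/- Scalar comparison lemma: let y : [0,∞) → ℝ be continuously differentiable with y(0) ≥ 0, and let α : ℝ → ℝ be locally Lipschitz with α(0) = 0 and α strictly increasing. If ẏ(t) ≥ −α(y(t)) for all t ≥ 0, then y(t) ≥ 0 for all t ≥ 0. -/
theorem scalar_comparison_lemma (y : ℝ → ℝ) (α : ℝ → ℝ) (y' : ℝ → ℝ)
    (hy : ∀ t, 0 ≤ t → HasDerivAt y (y' t) t)
    (hy'cont : ContinuousOn y' (Set.Ici 0))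
    (hα : LocallyLipschitz α) (hαmono : StrictMono α) (hα0 : α 0 = 0)
    (h0 : y 0 ≥ 0)
    (hineq : ∀ t, 0 ≤ t → y' t ≥ -α (y t)) :
    ∀ t, 0 ≤ t → y t ≥ 0 := by
  intro T hT
  by_contra hneg
  push_neg at hneg
  -- y is continuous at every t ≥ 0
  have hcont : ∀ t, 0 ≤ t → ContinuousAt y t := fun t ht => (hy t ht).continuousAt
  have hcontOn : ∀ s : Set ℝ, s ⊆ Set.Ici (0:ℝ) → ContinuousOn y s := by
    intro s hs
    exact fun t ht => (hcont t (hs ht)).continuousWithinAt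
  set S : Set ℝ := Set.Icc 0 T ∩ {t | 0 ≤ y t} with hS
  have hSne : S.Nonempty := ⟨0, ⟨le_refl 0, hT⟩, h0⟩
  have hSbdd : BddAbove S := ⟨T, fun x hx => hx.1.2⟩
  have hSclosed : IsClosed S := by
    have : S = Set.Icc 0 T ∩ y ⁻¹' Set.Ici 0 := rfl
    rw [this]
    exact ContinuousOn.preimage_isClosed_of_isClosed
      (hcontOn _ (fun x hx => hx.1)) isClosed_Icc isClosed_Ici
  set s := sSup S with hs
  have hsS : s ∈ S := hSclosed.csSup_mem hSne hSbdd
  have hs0 : 0 ≤ s := hsS.1.1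
  have hsT : s ≤ T := hsS.1.2
  have hys : 0 ≤ y s := hsS.2
  have hsltT : s < T := hsT.lt_of_ne (fun h => by rw [h] at hys; linarith)
  -- for t ∈ (s, T], y t < 0
  have hbelow : ∀ t, s < t → t ≤ T → y t < 0 := by
    intro t hst htT
    by_contra h
    push_neg at h
    have : t ∈ S := ⟨⟨le_trans hs0 hst.le, htT⟩, h⟩
    exact absurd (le_csSup hSbdd this) (not_le.mpr hst)
  -- y is monotone on [s, T]
  have hmono : MonotoneOn y (Set.Icc s T) := by
    apply monotoneOn_of_deriv_nonneg (convex_Icc s T)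
      (hcontOn _ (fun x hx => le_trans hs0 hx.1))
    · intro x hx
      rw [interior_Icc] at hx
      exact ((hy x (le_trans hs0 hx.1.le)).differentiableAt.differentiableWithinAt)
    intro x hx
    rw [interior_Icc] at hx
    have hx0 : 0 ≤ x := le_trans hs0 hx.1.le
    rw [(hy x hx0).deriv]
    have hyx : y x < 0 := hbelow x hx.1 hx.2.le
    have : α (y x) ≤ 0 := by
      calc α (y x) ≤ α 0 := (hαmono.le_iff_le).mpr hyx.le
        _ = 0 := hα0
    linarith [hineq x hx0]
  have := hmono ⟨le_refl s, hsT⟩ ⟨hsT, le_refl T⟩ hsT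
  linarith
end
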